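/- arXiv:math/0111054 — 3 statements merged into one kernel-verified Lean document; each statement's English description precedes it below -/
import Mathlib

section
/- Let X be a normal variety over a field of characteristic p > 0 and D an effective Cartier divisor with canonical section s. If X admits a D-splitting ψ : F^r_* O_X(D) → O_X (an O_X-linear map with f ↦ ψ(f s) a splitting of the r-th iterated Frobenius), then for every positive integer n, setting 𝐧 = p^{r(n-1)} + p^{r(n-2)} + ⋯ + 1, the variety X admits an 𝐧D-splitting, defined inductively by ψ¹ = ψ and ψⁿ(f σ^𝐧) = ψ(ψ^{n-1}(f σ^{𝐧-1}) σ). -/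
/-!
On an affine chart where `D` has local equation `d`, trivializing `O_X(D)` turns a
`D`-splitting into a map `ψ : A → A` with `ψ (a ^ q * x) = a * ψ x` for `q = p ^ r`
(the `O_X`-linearity of `F^r_*`) and `ψ d = 1`. Semilinearity composes,
so `ψ^[n]` is `q ^ n`-semilinear. The exponents `𝐧ₙ = ∑_{i<n} q ^ i` satisfy
`𝐧ₙ₊₁ = q 𝐧ₙ + 1`, hence
`ψ^[n+1] (d ^ 𝐧ₙ₊₁) = ψ^[n] (ψ ((d ^ 𝐧ₙ) ^ q * d)) = ψ^[n] (d ^ 𝐧ₙ * ψ d) = ψ^[n] (d ^ 𝐧ₙ) = 1`.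
-/

section PowSemilinear

variable {M : Type*} [Monoid M]

def IsPowSemilinear (q : ℕ) (ψ : M → M) : Prop :=
  ∀ a x : M, ψ (a ^ q * x) = a * ψ x

variable {q : ℕ} {ψ : M → M}

theorem IsPowSemilinear.iterate (hψ : IsPowSemilinear q ψ) (n : ℕ) :
    IsPowSemilinear (q ^ n) ψ^[n] := by
  induction n with
  | zero => simp [IsPowSemilinear]
  | succ n ih =>
    intro a x
    rw [Function.iterate_succ_apply', Function.iterate_succ_apply', pow_succ', pow_mul,
      ih, hψ]

theorem IsPowSemilinear.iterate_pow_geomSum_eq_one (hψ : IsPowSemilinear q ψ) {d : M}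
    (hd : ψ d = 1) (n : ℕ) : ψ^[n] (d ^ ∑ i ∈ Finset.range n, q ^ i) = 1 := by
  induction n with
  | zero => simp
  | succ n ih =>
    rw [Function.iterate_succ_apply, geom_sum_succ, pow_succ, mul_comm q, pow_mul, hψ, hd,
      mul_one, ih]

end PowSemilinear

theorem iterated_divisor_splitting_general
    (p : ℕ)
    (A : Type*) [CommRing A]
    (r : ℕ)
    (d : A)
    (ψ : A → A)
    (hadd : ∀ x y : A, ψ (x + y) = ψ x + ψ y)
    (hsemilinear : ∀ a x : A, ψ (a ^ p ^ r * x) = a * ψ x)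
    (hsplit : ψ d = 1) :
    ∀ n : ℕ, 0 < n →
      (∀ x y : A, ψ^[n] (x + y) = ψ^[n] x + ψ^[n] y) ∧
      (∀ a x : A, ψ^[n] (a ^ p ^ (r * n) * x) = a * ψ^[n] x) ∧
      ψ^[n] (d ^ (∑ i ∈ Finset.range n, p ^ (r * i))) = 1 := by
  intro n _
  have hψ : IsPowSemilinear (p ^ r) ψ := hsemilinear
  refine ⟨Function.Semiconj₂.iterate (op := (· + ·)) hadd n, ?_, ?_⟩
  · simp only [pow_mul]
    exact hψ.iterate n
  · simp only [pow_mul]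
    exact hψ.iterate_pow_geomSum_eq_one hsplit n

/-- iterating a `D`-splitting.  We work on a (normal, i.e. integrally
closed) affine piece where the effective Cartier divisor `D` is principal, defined by
`d ∈ A`; the invertible sheaf `O_X(D)` is trivialized by `d⁻¹`, under which a
`D`-splitting `ψ : F^r_* O_X(D) → O_X` becomes an additive map `ψ : A → A` that is
`p^r`-semilinear (`ψ(a^{p^r} x) = a ψ(x)`) and satisfies `ψ(d) = 1` (the splitting
condition `ψ(f s)∘(F^r)^# = id`, `s` being the canonical section of `O_X(D)`).
Then for every positive integer `n`, with `𝐧 = p^{r(n-1)} + ⋯ + p^r + 1`, the `n`-fold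
iterate `ψⁿ` (given inductively by `ψ¹ = ψ` and `ψⁿ(f σ^𝐧) = ψ(ψ^{n-1}(f σ^{𝐧-1}) σ)`,
i.e. `ψⁿ = ψ ∘ ψ^{n-1}` in the trivialization) is an `𝐧D`-splitting: it is additive,
`p^{rn}`-semilinear, and sends `d^𝐧` to `1`. -/
theorem iterated_divisor_splitting
    (p : ℕ) (hp : p.Prime)
    (A : Type*) [CommRing A] [IsDomain A] [IsIntegrallyClosed A] [CharP A p]
    (r : ℕ) (hr : 0 < r)
    (d : A)
    (ψ : A → A)
    (hadd : ∀ x y : A, ψ (x + y) = ψ x + ψ y)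
    (hsemilinear : ∀ a x : A, ψ (a ^ p ^ r * x) = a * ψ x)
    (hsplit : ψ d = 1) :
    ∀ n : ℕ, 0 < n →
      (∀ x y : A, ψ^[n] (x + y) = ψ^[n] x + ψ^[n] y) ∧
      (∀ a x : A, ψ^[n] (a ^ p ^ (r * n) * x) = a * ψ^[n] x) ∧
      ψ^[n] (d ^ (∑ i ∈ Finset.range n, p ^ (r * i))) = 1 :=
  iterated_divisor_splitting_general p A r d ψ hadd hsemilinear hsplit
end

section
/- In the Weyl group W with parabolic subgroup W_λ (the stabilizer of a dominant weight λ), for any w ∈ W and any x ∈ W^λ with x ≤ w in the Bruhat order on W/W_λ (i.e. x ≤ the minimal representative of wW_λ), the set { y ∈ W_λ : x y ≤ w } admits a unique maximal element. -/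
/-- The Bruhat order on a Coxeter group: `x ≤ y` iff there is a chain
`x = x₀, x₁ = x₀ t₁, …, x_k = y` where each `tᵢ` is a reflection and the lengths
strictly increase at each step. -/
def bruhatLE {B W : Type*} [Group W] {M : CoxeterMatrix B} (cs : CoxeterSystem M W)
    (x y : W) : Prop :=
  Relation.ReflTransGen
    (fun a b => ∃ t : W, cs.IsReflection t ∧ b = a * t ∧ cs.length a < cs.length b) x y

/-- The set of minimal-length representatives of the left cosets of a standard
parabolic subgroup. -/
def minCosetReps {B W : Type*} [Group W] {M : CoxeterMatrix B} (cs : CoxeterSystem M W)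
    (P : Subgroup W) : Set W :=
  {w : W | ∀ y ∈ P, cs.length w ≤ cs.length (w * y)}

namespace DeodharAux

open CoxeterSystem List
open scoped Classical

variable {B W : Type*} [Group W] {M : CoxeterMatrix B} (cs : CoxeterSystem M W)

local prefix:100 "s" => cs.simple
local prefix:100 "π" => cs.wordProd
local prefix:100 "ℓ" => cs.length
local prefix:100 "ris" => cs.rightInvSeq

lemma zmod2_add_self : ∀ x : ZMod 2, x + x = 0 := by decide

/-- The basic permutation. -/
noncomputable def dfun (i : B) : W × ZMod 2 → W × ZMod 2 :=
  fun p => (s i * p.1 * s i, p.2 + if p.1 = s i then 1 else 0)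

lemma dfun_invol (i : B) : Function.Involutive (dfun cs i) := by
  intro p
  unfold dfun
  ext
  · simp [mul_assoc, cs.simple_mul_simple_cancel_left, cs.simple_mul_simple_cancel_right]
  · simp only
    have h : (s i * p.1 * s i = s i) ↔ (p.1 = s i) := by
      constructor
      · intro h
        have := congrArg (fun z => s i * z * s i) h
        simpa [mul_assoc, cs.simple_mul_simple_cancel_left,
          cs.simple_mul_simple_cancel_right, cs.simple_mul_simple_self] using this
      · intro h; rw [h]; simp [cs.simple_mul_simple_self]
    rw [h]
    rcases eq_or_ne p.1 (s i) with h1 | h1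
    · simp [h1, add_assoc, zmod2_add_self]
    · simp [h1]

noncomputable def dperm (i : B) : Equiv.Perm (W × ZMod 2) := (dfun_invol cs i).toPerm

@[simp] lemma dperm_apply (i : B) (p : W × ZMod 2) : dperm cs i p = dfun cs i p := rfl

lemma sum_range_even_odd {Mo : Type*} [AddCommMonoid Mo] (f : ℕ → Mo) (m : ℕ) :
    ∑ k ∈ Finset.range m, (f (2 * k) + f (2 * k + 1)) = ∑ n ∈ Finset.range (2 * m), f n := by
  induction m with
  | zero => simp
  | succ m ih =>
    rw [Finset.sum_range_succ, ih, Nat.mul_succ]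
    rw [Finset.sum_range_succ, Finset.sum_range_succ]
    exact (add_assoc _ _ _).symm

lemma sum_range_two_blocks {Mo : Type*} [AddCommMonoid Mo] (f : ℕ → Mo) (m : ℕ) :
    ∑ n ∈ Finset.range (2 * m), f n
      = ∑ n ∈ Finset.range m, f n + ∑ n ∈ Finset.range m, f (m + n) := by
  have h2 : 2 * m = m + m := by ring
  rw [h2, Finset.sum_range_add]


section Lift

lemma conj_eq_iff (g u v : W) : g * u * g⁻¹ = v ↔ u = g⁻¹ * v * g := by
  constructor
  · intro h; rw [← h]; group
  · intro h; rw [h]; group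

lemma eq_mul_simple_iff (u v : W) (j : B) : u = v * s j ↔ u * s j = v := by
  constructor
  · intro h; rw [h, cs.simple_mul_simple_cancel_right]
  · intro h; rw [← h]; exact (cs.simple_mul_simple_cancel_right j).symm

variable (i i' : B)

lemma simple'_mul_pow (k : ℕ) :
    s i' * (s i * s i') ^ k = ((s i * s i') ^ k)⁻¹ * s i' := by
  induction k with
  | zero => simp
  | succ k ih =>
    have hsa : s i' * (s i * s i') = (s i * s i')⁻¹ * s i' := by
      rw [mul_inv_rev, cs.inv_simple, cs.inv_simple]; group
    calc s i' * (s i * s i') ^ (k + 1)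
        = (s i' * (s i * s i') ^ k) * (s i * s i') := by rw [pow_succ, mul_assoc]
      _ = ((s i * s i') ^ k)⁻¹ * (s i' * (s i * s i')) := by rw [ih, mul_assoc]
      _ = ((s i * s i') ^ k)⁻¹ * ((s i * s i')⁻¹ * s i') := by rw [hsa]
      _ = ((s i * s i') ^ (k + 1))⁻¹ * s i' := by
          conv_rhs => rw [pow_succ', mul_inv_rev]
          simp only [mul_assoc]

lemma conj_pow_simple (k : ℕ) :
    ((s i * s i') ^ k)⁻¹ * s i' * (s i * s i') ^ k
      = ((s i * s i') ^ (2 * k))⁻¹ * s i' := by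
  calc ((s i * s i') ^ k)⁻¹ * s i' * (s i * s i') ^ k
      = ((s i * s i') ^ k)⁻¹ * (s i' * (s i * s i') ^ k) := by rw [mul_assoc]
    _ = ((s i * s i') ^ k)⁻¹ * (((s i * s i') ^ k)⁻¹ * s i') := by
        rw [simple'_mul_pow]
    _ = (((s i * s i') ^ k) * ((s i * s i') ^ k))⁻¹ * s i' := by
        rw [mul_inv_rev, mul_assoc]
    _ = ((s i * s i') ^ (2 * k))⁻¹ * s i' := by rw [← pow_add, two_mul]

lemma conj_pow_simple' (k : ℕ) :
    ((s i * s i') ^ k)⁻¹ * ((s i * s i')⁻¹ * s i') * (s i * s i') ^ k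
      = ((s i * s i') ^ (2 * k + 1))⁻¹ * s i' := by
  calc ((s i * s i') ^ k)⁻¹ * ((s i * s i')⁻¹ * s i') * (s i * s i') ^ k
      = ((s i * s i') ^ (k + 1))⁻¹ * s i' * (s i * s i') ^ k := by
        conv_rhs => rw [pow_succ', mul_inv_rev]
        simp only [mul_assoc]
    _ = ((s i * s i') ^ (k + 1))⁻¹ * (((s i * s i') ^ k)⁻¹ * s i') := by
        rw [mul_assoc, simple'_mul_pow]
    _ = (((s i * s i') ^ k) * ((s i * s i') ^ (k + 1)))⁻¹ * s i' := by
        rw [mul_inv_rev, mul_assoc]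
    _ = ((s i * s i') ^ (2 * k + 1))⁻¹ * s i' := by
        rw [← pow_add]
        have hk : k + (k + 1) = 2 * k + 1 := by omega
        rw [hk]

/-- indicator used in the cocycle computation -/
noncomputable def gfun (t : W) : ZMod 2 :=
  (if t = s i' then 1 else 0) + (if t = s i' * s i * s i' then 1 else 0)

lemma pprod_apply (t : W) (ε : ZMod 2) :
    (dperm cs i * dperm cs i') (t, ε)
      = ((s i * s i') * t * (s i * s i')⁻¹, ε + gfun cs i i' t) := by
  have h1 : (dperm cs i * dperm cs i') (t, ε) = dperm cs i (dperm cs i' (t, ε)) := rfl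
  rw [h1]
  simp only [dperm_apply, dfun]
  ext
  · simp only [mul_inv_rev, cs.inv_simple]
    group
  · simp only
    have hcond : (s i' * t * s i' = s i) ↔ (t = s i' * s i * s i') := by
      constructor
      · intro h
        have := congrArg (fun z => s i' * z * s i') h
        simpa [mul_assoc, cs.simple_mul_simple_cancel_left,
          cs.simple_mul_simple_cancel_right] using this
      · intro h
        rw [h]
        simp [mul_assoc, cs.simple_mul_simple_self, cs.simple_mul_simple_cancel_left]
    rw [if_congr hcond rfl rfl, gfun, add_assoc]

lemma pprod_pow_apply (n : ℕ) (t : W) (ε : ZMod 2) :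
    ((dperm cs i * dperm cs i') ^ n) (t, ε)
      = ((s i * s i') ^ n * t * ((s i * s i') ^ n)⁻¹,
          ε + ∑ k ∈ Finset.range n,
            gfun cs i i' ((s i * s i') ^ k * t * ((s i * s i') ^ k)⁻¹)) := by
  induction n with
  | zero => simp
  | succ n ih =>
    rw [pow_succ', Equiv.Perm.mul_apply, ih, pprod_apply, Finset.sum_range_succ]
    ext
    · simp only
      conv_rhs => rw [pow_succ', mul_inv_rev]
      simp only [mul_assoc]
    · simp only
      rw [add_assoc]

lemma gfun_conj_eq (k : ℕ) (t : W) :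
    gfun cs i i' ((s i * s i') ^ k * t * ((s i * s i') ^ k)⁻¹)
      = (if t * s i' = ((s i * s i') ^ (2 * k))⁻¹ then 1 else 0)
        + (if t * s i' = ((s i * s i') ^ (2 * k + 1))⁻¹ then 1 else 0) := by
  have hcond1 : ((s i * s i') ^ k * t * ((s i * s i') ^ k)⁻¹ = s i')
      ↔ (t * s i' = ((s i * s i') ^ (2 * k))⁻¹) := by
    rw [conj_eq_iff, conj_pow_simple, ← eq_mul_simple_iff]
  have hcond2 : ((s i * s i') ^ k * t * ((s i * s i') ^ k)⁻¹ = s i' * s i * s i')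
      ↔ (t * s i' = ((s i * s i') ^ (2 * k + 1))⁻¹) := by
    have hs : s i' * s i * s i' = (s i * s i')⁻¹ * s i' := by
      rw [mul_inv_rev, cs.inv_simple, cs.inv_simple, mul_assoc]
    rw [hs, conj_eq_iff, conj_pow_simple', ← eq_mul_simple_iff]
  rw [gfun, if_congr hcond1 rfl rfl, if_congr hcond2 rfl rfl]

lemma dperm_liftable : M.IsLiftable (dperm cs) := by
  intro i i'
  have ham : (s i * s i') ^ M i i' = 1 := cs.simple_mul_simple_pow i i'
  apply Equiv.ext
  rintro ⟨t, ε⟩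
  rw [pprod_pow_apply, ham]
  have hsum : ∑ k ∈ Finset.range (M i i'),
      gfun cs i i' ((s i * s i') ^ k * t * ((s i * s i') ^ k)⁻¹) = 0 := by
    rw [Finset.sum_congr rfl (fun k _ => gfun_conj_eq cs i i' k t)]
    set H : ℕ → ZMod 2 := fun n => if t * s i' = ((s i * s i') ^ n)⁻¹ then 1 else 0 with hHdef
    calc ∑ k ∈ Finset.range (M i i'), (H (2 * k) + H (2 * k + 1))
        = ∑ n ∈ Finset.range (2 * M i i'), H n := sum_range_even_odd H (M i i')
      _ = ∑ n ∈ Finset.range (M i i'), H n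
          + ∑ n ∈ Finset.range (M i i'), H (M i i' + n) := sum_range_two_blocks H (M i i')
      _ = ∑ n ∈ Finset.range (M i i'), H n + ∑ n ∈ Finset.range (M i i'), H n := by
          congr 1
          apply Finset.sum_congr rfl
          intro n _
          simp only [hHdef, pow_add, ham, one_mul]
      _ = 0 := by
          rw [← Finset.sum_add_distrib,
            Finset.sum_congr rfl (fun n _ => zmod2_add_self (H n))]
          simp
  rw [hsum]
  simp

end Lift

section Eta

noncomputable def rho : W →* Equiv.Perm (W × ZMod 2) :=
  cs.lift ⟨dperm cs, dperm_liftable cs⟩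

lemma rho_simple (i : B) : rho cs (s i) = dperm cs i :=
  cs.lift_apply_simple (dperm_liftable cs) i

lemma zmod2_eq_of_add_eq_zero : ∀ x y : ZMod 2, x + y = 0 → x = y := by decide

lemma rho_wordProd (ω : List B) (t : W) (ε : ZMod 2) :
    rho cs (π ω) (t, ε) = (π ω * t * (π ω)⁻¹,
      ε + ((ris ω).map (fun u => if u = t then (1 : ZMod 2) else 0)).sum) := by
  induction ω generalizing t ε with
  | nil => simp
  | cons i ω ih =>
    have hris : ris (i :: ω) = ((π ω)⁻¹ * s i * π ω) :: ris ω := rfl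
    rw [cs.wordProd_cons, map_mul, Equiv.Perm.mul_apply, ih, rho_simple]
    rw [hris, List.map_cons, List.sum_cons]
    have happ : dperm cs i (π ω * t * (π ω)⁻¹,
        ε + ((ris ω).map (fun u => if u = t then (1 : ZMod 2) else 0)).sum)
      = (s i * (π ω * t * (π ω)⁻¹) * s i,
        (ε + ((ris ω).map (fun u => if u = t then (1 : ZMod 2) else 0)).sum)
          + if π ω * t * (π ω)⁻¹ = s i then 1 else 0) := rfl
    rw [happ]
    ext
    · simp only
      conv_rhs => rw [mul_inv_rev, cs.inv_simple]
      simp only [mul_assoc]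
    · simp only
      have hcond : (π ω * t * (π ω)⁻¹ = s i) ↔ ((π ω)⁻¹ * s i * π ω = t) := by
        rw [conj_eq_iff]
        exact eq_comm
      rw [if_congr hcond rfl rfl]
      ring

/-- The reflection cocycle mod 2. -/
noncomputable def nn (w t : W) : ZMod 2 := (rho cs w (t, 0)).2

lemma rho_apply_eq (w t : W) (ε : ZMod 2) :
    rho cs w (t, ε) = (w * t * w⁻¹, ε + nn cs w t) := by
  obtain ⟨ω, rfl⟩ := cs.wordProd_surjective w
  rw [rho_wordProd, nn, rho_wordProd]
  simp

lemma nn_mul (u v t : W) : nn cs (u * v) t = nn cs v t + nn cs u (v * t * v⁻¹) := by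
  have h : rho cs (u * v) (t, 0) = rho cs u (rho cs v (t, 0)) := by
    rw [map_mul]; rfl
  rw [nn, h, rho_apply_eq, rho_apply_eq]
  simp

lemma nn_simple (i : B) (t : W) : nn cs (s i) t = if t = s i then 1 else 0 := by
  rw [nn, rho_simple]
  simp [dperm, dfun_invol, Function.Involutive.toPerm, dfun]

lemma nn_one (t : W) : nn cs 1 t = 0 := by
  rw [nn, map_one]; rfl

lemma nn_inv (u t : W) : nn cs u⁻¹ t = nn cs u (u⁻¹ * t * u) := by
  have h := nn_mul cs u u⁻¹ t
  rw [mul_inv_cancel, nn_one] at h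
  have h2 : u⁻¹ * t * u⁻¹⁻¹ = u⁻¹ * t * u := by rw [inv_inv]
  rw [h2] at h
  exact zmod2_eq_of_add_eq_zero _ _ h.symm

lemma nn_refl_self {t : W} (ht : cs.IsReflection t) : nn cs t t = 1 := by
  obtain ⟨u, i, rfl⟩ := ht
  have h1 : nn cs (u * s i * u⁻¹) (u * s i * u⁻¹)
      = nn cs u⁻¹ (u * s i * u⁻¹) + nn cs (u * s i) (s i) := by
    have := nn_mul cs (u * s i) u⁻¹ (u * s i * u⁻¹)
    rw [show u⁻¹ * (u * s i * u⁻¹) * u⁻¹⁻¹ = s i by group] at this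
    exact this
  have h2 : nn cs u⁻¹ (u * s i * u⁻¹) = nn cs u (s i) := by
    rw [nn_inv]
    congr 1
    group
  have h3 : nn cs (u * s i) (s i) = 1 + nn cs u (s i) := by
    have := nn_mul cs u (s i) (s i)
    rw [show s i * s i * (s i)⁻¹ = s i by group] at this
    rw [this, nn_simple, if_pos rfl]
  rw [h1, h2, h3]
  have : ∀ x : ZMod 2, x + (1 + x) = 1 := by decide
  exact this _

lemma mem_ris_of_nn_one {w t : W} (h : nn cs w t = 1) (ω : List B) (hω : π ω = w) :
    t ∈ ris ω := by
  by_contra hmem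
  have hsum : ((ris ω).map (fun u => if u = t then (1 : ZMod 2) else 0)).sum = 0 := by
    apply List.sum_eq_zero
    intro x hx
    obtain ⟨u, hu, rfl⟩ := List.mem_map.mp hx
    rw [if_neg]
    intro he
    exact hmem (he ▸ hu)
  have : nn cs w t = 0 := by
    rw [nn, ← hω, rho_wordProd, hsum]
    simp
  rw [this] at h
  exact absurd h (by decide)

lemma length_lt_of_nn_one {w t : W} (h : nn cs w t = 1) : ℓ (w * t) < ℓ w := by
  obtain ⟨ω, hred, hw⟩ := cs.exists_reduced_word' w
  subst hw
  exact (cs.isRightInversion_of_mem_rightInvSeq hred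
    (mem_ris_of_nn_one cs h ω rfl)).2

lemma nn_eq_one_iff {w t : W} (ht : cs.IsReflection t) :
    nn cs w t = 1 ↔ ℓ (w * t) < ℓ w := by
  constructor
  · exact length_lt_of_nn_one cs
  · intro hlt
    by_contra hne
    have h0 : nn cs w t = 0 := by
      rcases (by decide : ∀ x : ZMod 2, x = 0 ∨ x = 1) (nn cs w t) with h | h
      · exact h
      · exact absurd h hne
    have h1 : nn cs (w * t) t = 1 := by
      have := nn_mul cs w t t
      rw [show t * t * t⁻¹ = t by rw [ht.mul_self, ht.inv]; group] at this
      rw [this, nn_refl_self cs ht, h0]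
      decide
    have h2 : ℓ (w * t * t) < ℓ (w * t) := length_lt_of_nn_one cs h1
    rw [mul_assoc, ht.mul_self, mul_one] at h2
    omega

theorem strong_exchange {w t : W} (ht : cs.IsReflection t) (hlt : ℓ (w * t) < ℓ w)
    (ω : List B) (hω : π ω = w) :
    ∃ k, k < ω.length ∧ w * t = π (ω.eraseIdx k) := by
  have hmem : t ∈ ris ω := mem_ris_of_nn_one cs ((nn_eq_one_iff cs ht).mpr hlt) ω hω
  obtain ⟨⟨k, hk⟩, hget⟩ := List.mem_iff_get.mp hmem
  have hk' : k < ω.length := by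
    have := cs.length_rightInvSeq ω
    omega
  refine ⟨k, hk', ?_⟩
  have hgd : (ris ω).getD k 1 = t := by
    rw [List.getD_eq_getElem _ _ hk]
    rw [← hget]
    simp
  have := cs.wordProd_mul_getD_rightInvSeq ω k
  rw [hgd, hω] at this
  exact this

end Eta

section Deletion

lemma exists_reduced_sublist' :
    ∀ (n : ℕ) (ω : List B), ω.length ≤ n →
      ∃ σ, σ.Sublist ω ∧ cs.IsReduced σ ∧ π σ = π ω := by
  intro n
  induction n with
  | zero =>
    intro ω hlen
    rw [List.length_eq_zero_iff.mp (Nat.le_zero.mp hlen)]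
    exact ⟨[], List.Sublist.refl _, by simp [CoxeterSystem.IsReduced], rfl⟩
  | succ n ih =>
    intro ω hlen
    by_cases hred : cs.IsReduced ω
    · exact ⟨ω, List.Sublist.refl ω, hred, rfl⟩
    cases ω with
    | nil => exact ⟨[], List.Sublist.refl _, by simp [CoxeterSystem.IsReduced], rfl⟩
    | cons i ω' =>
      obtain ⟨σ', hsub', hred', hprod'⟩ := ih ω' (by
        simp only [List.length_cons] at hlen; omega)
      by_cases h2 : cs.IsReduced (i :: σ')
      · exact ⟨i :: σ', List.Sublist.cons₂ i hsub', h2, by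
          rw [cs.wordProd_cons, cs.wordProd_cons, hprod']⟩
      · have hσlen : σ'.length = ℓ (π σ') := hred'.symm
        have hdesc : ℓ (s i * π σ') < ℓ (π σ') := by
          rcases cs.length_simple_mul (π σ') i with h | h
          · exfalso
            apply h2
            show ℓ (π (i :: σ')) = (i :: σ').length
            rw [cs.wordProd_cons, h, List.length_cons, hσlen]
          · omega
        have hne : π σ' ≠ 1 := by
          intro hcontra
          rw [hcontra] at hdesc
          simp at hdesc
        have hlt : ℓ ((π σ')⁻¹ * s i) < ℓ ((π σ')⁻¹) := by
          have he : (π σ')⁻¹ * s i = (s i * π σ')⁻¹ := by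
            rw [mul_inv_rev, cs.inv_simple]
          rw [he, cs.length_inv, cs.length_inv]
          exact hdesc
        obtain ⟨k, hk, heq⟩ := strong_exchange cs (cs.isReflection_simple i) hlt
          σ'.reverse (cs.wordProd_reverse σ')
        set τ : List B := (σ'.reverse.eraseIdx k).reverse with hτ
        have hτprod : π τ = s i * π σ' := by
          rw [hτ, cs.wordProd_reverse, ← heq, mul_inv_rev, cs.inv_simple, inv_inv]
        have hτsub : τ.Sublist σ' := by
          have h := List.reverse_sublist.mpr (List.eraseIdx_sublist σ'.reverse k)
          simpa [hτ] using h
        have hτlen : τ.length ≤ n := by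
          have hk' : k < σ'.reverse.length := hk
          have h1 : (σ'.reverse.eraseIdx k).length = σ'.reverse.length - 1 :=
            List.length_eraseIdx_of_lt hk'
          have h2 : σ'.length ≤ ω'.length := List.Sublist.length_le hsub'
          have h3 : ω'.length + 1 ≤ n + 1 := by simpa using hlen
          have h4 : τ.length = (σ'.reverse.eraseIdx k).length := by
            simp [hτ]
          rw [h4, h1]
          simp only [List.length_reverse]
          omega
        obtain ⟨σ, hs1, hs2, hs3⟩ := ih τ hτlen
        refine ⟨σ, ?_, hs2, ?_⟩
        · exact (((hs1.trans hτsub).trans hsub').cons i)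
        · rw [hs3, hτprod, cs.wordProd_cons, hprod']

lemma exists_reduced_sublist (ω : List B) :
    ∃ σ, σ.Sublist ω ∧ cs.IsReduced σ ∧ π σ = π ω :=
  exists_reduced_sublist' cs ω.length ω le_rfl

end Deletion

section Bruhat

lemma bruhatLE_refl (u : W) : bruhatLE cs u u := Relation.ReflTransGen.refl

lemma bruhatLE_trans {u v w : W} (h1 : bruhatLE cs u v) (h2 : bruhatLE cs v w) :
    bruhatLE cs u w := Relation.ReflTransGen.trans h1 h2

lemma length_le_of_bruhatLE {u w : W} (h : bruhatLE cs u w) : ℓ u ≤ ℓ w := by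
  induction h with
  | refl => exact le_rfl
  | tail _ step ih =>
    obtain ⟨t, _, rfl, hlt⟩ := step
    omega

lemma eq_of_bruhatLE_of_length_le {u w : W} (h : bruhatLE cs u w) (hl : ℓ w ≤ ℓ u) :
    u = w := by
  rcases (Relation.ReflTransGen.cases_tail h) with rfl | ⟨v, hv, step⟩
  · rfl
  · obtain ⟨t, _, rfl, hlt⟩ := step
    have := length_le_of_bruhatLE cs hv
    omega

lemma bruhatLE_antisymm {u w : W} (h1 : bruhatLE cs u w) (h2 : bruhatLE cs w u) : u = w :=
  eq_of_bruhatLE_of_length_le cs h1 (length_le_of_bruhatLE cs h2)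

lemma bruhatLE_step {u t : W} (ht : cs.IsReflection t) (h : ℓ u < ℓ (u * t)) :
    bruhatLE cs u (u * t) := Relation.ReflTransGen.single ⟨t, ht, rfl, h⟩

lemma bruhatLE_step_simple {u : W} {i : B} (h : ℓ u < ℓ (u * s i)) :
    bruhatLE cs u (u * s i) := bruhatLE_step cs (cs.isReflection_simple i) h

lemma bruhatLE_simple_step {u : W} {i : B} (h : ℓ (u * s i) < ℓ u) :
    bruhatLE cs (u * s i) u := by
  have := bruhatLE_step_simple cs (u := u * s i) (i := i)
  rw [cs.simple_mul_simple_cancel_right] at this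
  exact this h

lemma bruhatLE_inv {u w : W} (h : bruhatLE cs u w) : bruhatLE cs u⁻¹ w⁻¹ := by
  induction h with
  | refl => exact bruhatLE_refl cs _
  | tail _ step ih =>
    obtain ⟨t, ht, rfl, hlt⟩ := step
    rename_i v _
    refine Relation.ReflTransGen.tail ih ⟨v * t * v⁻¹, ht.conj v, ?_, ?_⟩
    · rw [mul_inv_rev, ht.inv]
      group
    · rw [cs.length_inv, cs.length_inv]
      exact hlt

/-- the subword property, forward direction -/
lemma subword_of_bruhatLE {u w : W} (h : bruhatLE cs u w) :
    ∀ ω : List B, cs.IsReduced ω → π ω = w →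
      ∃ σ, σ.Sublist ω ∧ cs.IsReduced σ ∧ π σ = u := by
  induction h with
  | refl => exact fun ω hred hw => ⟨ω, List.Sublist.refl ω, hred, hw⟩
  | @tail v w' hv step ih =>
    intro ω hred hw
    obtain ⟨t, ht, rfl, hlt⟩ := step
    have hlt' : ℓ ((v * t) * t) < ℓ (v * t) := by
      rw [mul_assoc, ht.mul_self, mul_one]
      exact hlt
    obtain ⟨k, hk, heq⟩ := strong_exchange cs ht hlt' ω hw
    have heq' : v = π (ω.eraseIdx k) := by
      rw [← heq, mul_assoc, ht.mul_self, mul_one]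
    obtain ⟨σ₁, hs1, hs2, hs3⟩ := exists_reduced_sublist cs (ω.eraseIdx k)
    obtain ⟨σ, ht1, ht2, ht3⟩ := ih σ₁ hs2 (by rw [hs3, ← heq'])
    exact ⟨σ, (ht1.trans hs1).trans (List.eraseIdx_sublist ω k), ht2, ht3⟩

lemma length_mul_simple_of_lt {a : W} {i : B} (h : ℓ a < ℓ (a * s i)) :
    ℓ (a * s i) = ℓ a + 1 := by
  rcases cs.length_mul_simple a i with h' | h' <;> omega

lemma length_mul_simple_of_gt {a : W} {i : B} (h : ℓ (a * s i) < ℓ a) :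
    ℓ (a * s i) + 1 = ℓ a := by
  rcases cs.length_mul_simple a i with h' | h' <;> omega

lemma L_of_SW (n : ℕ)
    (hsw : ∀ ω σ : List B, cs.IsReduced ω → ω.length ≤ n → σ.Sublist ω →
      bruhatLE cs (π σ) (π ω)) (b : W) (i : B) (hb : ℓ b ≤ n)
    (hbi : ℓ b < ℓ (b * s i)) (a : W) (hab : bruhatLE cs a b) :
    ℓ a < ℓ (a * s i) → bruhatLE cs (a * s i) (b * s i) := by
  induction hab using Relation.ReflTransGen.head_induction_on with
  | refl => exact fun _ => bruhatLE_refl cs _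
  | @head u v h' h ih =>
    intro ha
    obtain ⟨t, ht, rfl, hlt⟩ := h'
    by_cases hc : ℓ (u * t) < ℓ (u * t * s i)
    · refine bruhatLE_trans cs ?_ (ih hc)
      have ht' : cs.IsReflection (s i * t * s i) := by
        have := ht.conj (s i)
        rwa [cs.inv_simple] at this
      have heq : (u * s i) * (s i * t * s i) = u * t * s i := by
        rw [← mul_assoc, ← mul_assoc, cs.simple_mul_simple_cancel_right]
      have hlen : ℓ (u * s i) < ℓ ((u * s i) * (s i * t * s i)) := by
        rw [heq, length_mul_simple_of_lt cs ha, length_mul_simple_of_lt cs hc]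
        omega
      have := bruhatLE_step cs ht' hlen
      rwa [heq] at this
    · push_neg at hc
      have hc' : ℓ (u * t * s i) < ℓ (u * t) :=
        lt_of_le_of_ne hc (cs.length_mul_simple_ne (u * t) i)
      have h2 : bruhatLE cs (u * s i) (u * t) := by
        obtain ⟨ω', hred', hw'⟩ := cs.exists_reduced_word' (u * t * s i)
        have hπω : π (ω' ++ [i]) = u * t := by
          rw [cs.wordProd_append, cs.wordProd_singleton, ← hw',
            cs.simple_mul_simple_cancel_right]
        have hω'len : ℓ (u * t * s i) = ω'.length := by rw [hw']; exact hred'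
        have hlenat : ℓ (u * t) = ω'.length + 1 := by
          have := length_mul_simple_of_gt cs hc'
          omega
        have hredω : cs.IsReduced (ω' ++ [i]) := by
          show ℓ (π (ω' ++ [i])) = _
          rw [hπω, List.length_append, List.length_singleton, hlenat]
        have hlt2 : ℓ ((u * t) * t) < ℓ (u * t) := by
          rw [mul_assoc, ht.mul_self, mul_one]
          exact hlt
        obtain ⟨k, hk, heqk⟩ := strong_exchange cs ht hlt2 (ω' ++ [i]) hπω
        have heqk' : u = π ((ω' ++ [i]).eraseIdx k) := by
          rw [← heqk, mul_assoc, ht.mul_self, mul_one]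
        rcases lt_or_ge k ω'.length with hkl | hkg
        · have herase : (ω' ++ [i]).eraseIdx k = ω'.eraseIdx k ++ [i] :=
            List.eraseIdx_append_of_lt_length hkl [i]
          have hasi : u * s i = π (ω'.eraseIdx k) := by
            rw [heqk', herase, cs.wordProd_append, cs.wordProd_singleton,
              cs.simple_mul_simple_cancel_right]
          rw [hasi, ← hπω]
          have hbub : ℓ (u * t) ≤ ℓ b := length_le_of_bruhatLE cs h
          refine hsw _ _ hredω ?_ ?_
          · rw [List.length_append, List.length_singleton]
            omega
          · exact (List.eraseIdx_sublist ω' k).trans (List.sublist_append_left ω' [i])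
        · have herase : (ω' ++ [i]).eraseIdx k = ω' := by
            rw [List.eraseIdx_append_of_length_le hkg]
            have h0 : k - ω'.length = 0 := by
              rw [List.length_append, List.length_singleton] at hk
              omega
            rw [h0]
            simp
          have hthis : u = u * t * s i := heqk'.trans (by rw [herase]; exact hw'.symm)
          have hfin : u * s i = u * t := by
            conv_lhs => rw [hthis]
            rw [cs.simple_mul_simple_cancel_right]
          rw [hfin]
          exact bruhatLE_refl cs _
      exact bruhatLE_trans cs (bruhatLE_trans cs h2 h) (bruhatLE_step_simple cs hbi)

lemma sw_le : ∀ (n : ℕ) (ω σ : List B), cs.IsReduced ω → ω.length ≤ n → σ.Sublist ω →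
    bruhatLE cs (π σ) (π ω) := by
  intro n
  induction n with
  | zero =>
    intro ω σ _ hlen hsub
    rw [List.length_eq_zero_iff.mp (Nat.le_zero.mp hlen)] at hsub ⊢
    rw [List.sublist_nil.mp hsub]
    exact bruhatLE_refl cs _
  | succ n ih =>
    intro ω σ hred hlen hsub
    obtain ⟨τ, hτsub, hτred, hτprod⟩ := exists_reduced_sublist cs σ
    rw [← hτprod]
    have hτω : τ.Sublist ω := hτsub.trans hsub
    clear hτprod hτsub hsub
    rcases List.eq_nil_or_concat' ω with rfl | ⟨ω₁, i, rfl⟩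
    · rw [List.sublist_nil.mp hτω]
      exact bruhatLE_refl cs _
    · have hred₁ : cs.IsReduced ω₁ := by
        have := CoxeterSystem.IsReduced.take hred ω₁.length
        rwa [List.take_left] at this
      have hlen₁ : ω₁.length ≤ n := by
        rw [List.length_append, List.length_singleton] at hlen
        omega
      have hstep : bruhatLE cs (π ω₁) (π (ω₁ ++ [i])) := by
        rw [cs.wordProd_append, cs.wordProd_singleton]
        apply bruhatLE_step_simple cs
        have l1 : ℓ (π ω₁) = ω₁.length := hred₁
        have l2 : ℓ (π ω₁ * s i) = ω₁.length + 1 := by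
          have := hred
          rw [CoxeterSystem.IsReduced, cs.wordProd_append, cs.wordProd_singleton,
            List.length_append, List.length_singleton] at this
          omega
        omega
      obtain ⟨σ₁, σ₂, rfl, hσ₁, hσ₂⟩ := List.sublist_append_iff.mp hτω
      rcases List.sublist_singleton.mp hσ₂ with rfl | rfl
      · rw [List.append_nil]
        exact bruhatLE_trans cs (ih ω₁ σ₁ hred₁ hlen₁ hσ₁) hstep
      · have hτred' : cs.IsReduced (σ₁ ++ [i]) := hτred
        have hσ₁red : ℓ (π σ₁) = σ₁.length := by
          have h1 : ℓ (π (σ₁ ++ [i])) = σ₁.length + 1 := by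
            rw [hτred']
            simp
          have h2 := cs.length_wordProd_le σ₁
          rw [cs.wordProd_append, cs.wordProd_singleton] at h1
          rcases cs.length_mul_simple (π σ₁) i with h | h <;> omega
        have hasc : ℓ (π σ₁) < ℓ (π σ₁ * s i) := by
          have h1 : ℓ (π (σ₁ ++ [i])) = σ₁.length + 1 := by
            rw [hτred']
            simp
          rw [cs.wordProd_append, cs.wordProd_singleton] at h1
          omega
        have hbasc : ℓ (π ω₁) < ℓ (π ω₁ * s i) := by
          have l2 : ℓ (π ω₁ * s i) = ω₁.length + 1 := by
            have := hred
            rw [CoxeterSystem.IsReduced, cs.wordProd_append, cs.wordProd_singleton,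
              List.length_append, List.length_singleton] at this
            omega
          have l1 : ℓ (π ω₁) = ω₁.length := hred₁
          omega
        have hab : bruhatLE cs (π σ₁) (π ω₁) := ih ω₁ σ₁ hred₁ hlen₁ hσ₁
        have := L_of_SW cs n ih (π ω₁) i (by rw [show ℓ (π ω₁) = ω₁.length from hred₁]; exact hlen₁)
          hbasc (π σ₁) hab hasc
        rw [cs.wordProd_append, cs.wordProd_singleton,
          cs.wordProd_append, cs.wordProd_singleton]
        exact this

/-- the subword property, backward direction -/
lemma bruhatLE_of_sublist {ω σ : List B} (hred : cs.IsReduced ω) (hsub : σ.Sublist ω) :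
    bruhatLE cs (π σ) (π ω) :=
  sw_le cs ω.length ω σ hred le_rfl hsub

/-- right lifting: both ascents -/
lemma bruhatLE_mul_simple_right {a b : W} {i : B} (hab : bruhatLE cs a b)
    (ha : ℓ a < ℓ (a * s i)) (hb : ℓ b < ℓ (b * s i)) :
    bruhatLE cs (a * s i) (b * s i) := by
  refine L_of_SW cs (ℓ b) ?_ b i le_rfl hb a hab ha
  intro ω σ hred hlen hsub
  exact bruhatLE_of_sublist cs hred hsub

section Lifting

variable {i : B}

/-- Set-up: a reduced word of `b` ending in `i`, when `ℓ(b sᵢ) < ℓ(b)`. -/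
lemma exists_reduced_word_concat {b : W} (hb : ℓ (b * s i) < ℓ b) :
    ∃ ω' : List B, cs.IsReduced (ω' ++ [i]) ∧ π (ω' ++ [i]) = b ∧ π ω' = b * s i := by
  obtain ⟨ω', hred', hw'⟩ := cs.exists_reduced_word' (b * s i)
  have hπ : π (ω' ++ [i]) = b := by
    rw [cs.wordProd_append, cs.wordProd_singleton, ← hw',
      cs.simple_mul_simple_cancel_right]
  have hω'len : ℓ (b * s i) = ω'.length := by rw [hw']; exact hred'
  have hlenb : ℓ b = ω'.length + 1 := by
    have := length_mul_simple_of_gt cs hb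
    omega
  refine ⟨ω', ?_, hπ, hw'.symm⟩
  show ℓ (π (ω' ++ [i])) = _
  rw [hπ, List.length_append, List.length_singleton, hlenb]

lemma lift1R_fwd {a b : W} (hb : ℓ (b * s i) < ℓ b) (hab : bruhatLE cs a b)
    (ha : ℓ (a * s i) < ℓ a) : bruhatLE cs (a * s i) (b * s i) := by
  obtain ⟨ω', hredω, hπω, hπω'⟩ := exists_reduced_word_concat cs hb
  obtain ⟨σ, hsub, hredσ, hπσ⟩ := subword_of_bruhatLE cs hab _ hredω hπω
  have hredω' : cs.IsReduced ω' := by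
    have := CoxeterSystem.IsReduced.take hredω ω'.length
    rwa [List.take_left] at this
  obtain ⟨σ₁, σ₂, rfl, hσ₁, hσ₂⟩ := List.sublist_append_iff.mp hsub
  rcases List.sublist_singleton.mp hσ₂ with rfl | rfl
  · rw [List.append_nil] at hπσ
    have h1 : bruhatLE cs a (b * s i) := by
      rw [← hπσ, ← hπω']
      exact bruhatLE_of_sublist cs hredω' hσ₁
    exact bruhatLE_trans cs (bruhatLE_simple_step cs ha) h1
  · have hasi : a * s i = π σ₁ := by
      rw [← hπσ, cs.wordProd_append, cs.wordProd_singleton,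
        cs.simple_mul_simple_cancel_right]
    rw [hasi, ← hπω']
    exact bruhatLE_of_sublist cs hredω' hσ₁

lemma lift2R_fwd {a b : W} (hb : ℓ (b * s i) < ℓ b) (hab : bruhatLE cs a b)
    (ha : ℓ a < ℓ (a * s i)) : bruhatLE cs a (b * s i) := by
  obtain ⟨ω', hredω, hπω, hπω'⟩ := exists_reduced_word_concat cs hb
  obtain ⟨σ, hsub, hredσ, hπσ⟩ := subword_of_bruhatLE cs hab _ hredω hπω
  have hredω' : cs.IsReduced ω' := by
    have := CoxeterSystem.IsReduced.take hredω ω'.length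
    rwa [List.take_left] at this
  obtain ⟨σ₁, σ₂, rfl, hσ₁, hσ₂⟩ := List.sublist_append_iff.mp hsub
  rcases List.sublist_singleton.mp hσ₂ with rfl | rfl
  · rw [List.append_nil] at hπσ
    rw [← hπσ, ← hπω']
    exact bruhatLE_of_sublist cs hredω' hσ₁
  · exfalso
    have hasi : a * s i = π σ₁ := by
      rw [← hπσ, cs.wordProd_append, cs.wordProd_singleton,
        cs.simple_mul_simple_cancel_right]
    have h1 : ℓ (a * s i) ≤ σ₁.length := by
      rw [hasi]; exact cs.length_wordProd_le σ₁
    have h2 : ℓ a = σ₁.length + 1 := by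
      rw [← hπσ]
      rw [show ℓ (π (σ₁ ++ [i])) = (σ₁ ++ [i]).length from hredσ]
      simp
    omega

lemma lift1R_rev {a b : W} (hb : ℓ (b * s i) < ℓ b) (ha : ℓ (a * s i) < ℓ a)
    (h : bruhatLE cs (a * s i) (b * s i)) : bruhatLE cs a b := by
  have := bruhatLE_mul_simple_right cs h (i := i) ?_ ?_
  · rwa [cs.simple_mul_simple_cancel_right, cs.simple_mul_simple_cancel_right] at this
  · rwa [cs.simple_mul_simple_cancel_right]
  · rwa [cs.simple_mul_simple_cancel_right]

lemma lift2R_rev {a b : W} (hb : ℓ (b * s i) < ℓ b) (h : bruhatLE cs a (b * s i)) :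
    bruhatLE cs a b :=
  bruhatLE_trans cs h (bruhatLE_simple_step cs hb)

lemma b2R {a b : W} (hb : ℓ (b * s i) < ℓ b) (hab : bruhatLE cs a b)
    (ha : ℓ a < ℓ (a * s i)) : bruhatLE cs (a * s i) b := by
  have h1 : bruhatLE cs a (b * s i) := lift2R_fwd cs hb hab ha
  have h2 := bruhatLE_mul_simple_right cs h1 (i := i) ha
    (by rwa [cs.simple_mul_simple_cancel_right])
  rwa [cs.simple_mul_simple_cancel_right] at h2

/- left versions -/

lemma bruhatLE_inv_iff {a b : W} : bruhatLE cs a⁻¹ b⁻¹ ↔ bruhatLE cs a b :=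
  ⟨fun h => by simpa using bruhatLE_inv cs h, bruhatLE_inv cs⟩

lemma inv_mul_simple (a : W) (i : B) : (a⁻¹ * s i)⁻¹ = s i * a := by
  rw [mul_inv_rev, cs.inv_simple, inv_inv]

lemma length_inv_mul_simple (a : W) (i : B) : ℓ (a⁻¹ * s i) = ℓ (s i * a) := by
  rw [← cs.length_inv, inv_mul_simple]

lemma Lleft {a b : W} (hab : bruhatLE cs a b) (ha : ℓ a < ℓ (s i * a))
    (hb : ℓ b < ℓ (s i * b)) : bruhatLE cs (s i * a) (s i * b) := by
  rw [← bruhatLE_inv_iff, ← inv_mul_simple cs a i, ← inv_mul_simple cs b i, inv_inv, inv_inv]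
  apply bruhatLE_mul_simple_right cs (bruhatLE_inv cs hab)
  · rw [length_inv_mul_simple, cs.length_inv]; exact ha
  · rw [length_inv_mul_simple, cs.length_inv]; exact hb

lemma lift1L_fwd {a b : W} (hb : ℓ (s i * b) < ℓ b) (hab : bruhatLE cs a b)
    (ha : ℓ (s i * a) < ℓ a) : bruhatLE cs (s i * a) (s i * b) := by
  rw [← bruhatLE_inv_iff, ← inv_mul_simple cs a i, ← inv_mul_simple cs b i, inv_inv, inv_inv]
  apply lift1R_fwd cs (a := a⁻¹) (b := b⁻¹) (i := i)
  · rw [length_inv_mul_simple, cs.length_inv]; exact hb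
  · exact bruhatLE_inv cs hab
  · rw [length_inv_mul_simple, cs.length_inv]; exact ha

lemma lift2L_fwd {a b : W} (hb : ℓ (s i * b) < ℓ b) (hab : bruhatLE cs a b)
    (ha : ℓ a < ℓ (s i * a)) : bruhatLE cs a (s i * b) := by
  rw [← bruhatLE_inv_iff, ← inv_mul_simple cs b i, inv_inv]
  apply lift2R_fwd cs (a := a⁻¹) (b := b⁻¹) (i := i)
  · rw [length_inv_mul_simple, cs.length_inv]; exact hb
  · exact bruhatLE_inv cs hab
  · rw [length_inv_mul_simple, cs.length_inv]; exact ha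

lemma lift1L_rev {a b : W} (hb : ℓ (s i * b) < ℓ b) (ha : ℓ (s i * a) < ℓ a)
    (h : bruhatLE cs (s i * a) (s i * b)) : bruhatLE cs a b := by
  rw [← bruhatLE_inv_iff]
  apply lift1R_rev cs (a := a⁻¹) (b := b⁻¹) (i := i)
  · rw [length_inv_mul_simple, cs.length_inv]; exact hb
  · rw [length_inv_mul_simple, cs.length_inv]; exact ha
  · rw [← inv_mul_simple cs a i, ← inv_mul_simple cs b i] at h
    simpa using bruhatLE_inv cs h

lemma simple_mul_step {b : W} (hb : ℓ (s i * b) < ℓ b) : bruhatLE cs (s i * b) b := by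
  rw [← bruhatLE_inv_iff, ← inv_mul_simple cs b i, inv_inv]
  apply bruhatLE_simple_step cs
  rw [length_inv_mul_simple, cs.length_inv]
  exact hb

lemma mul_simple_step' {b : W} (hb : ℓ b < ℓ (s i * b)) : bruhatLE cs b (s i * b) := by
  rw [← bruhatLE_inv_iff, ← inv_mul_simple cs b i, inv_inv]
  apply bruhatLE_step_simple cs
  rw [length_inv_mul_simple, cs.length_inv]
  exact hb

lemma lift2L_rev {a b : W} (hb : ℓ (s i * b) < ℓ b) (h : bruhatLE cs a (s i * b)) :
    bruhatLE cs a b :=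
  bruhatLE_trans cs h (simple_mul_step cs hb)

lemma b2L {a b : W} (hb : ℓ (s i * b) < ℓ b) (hab : bruhatLE cs a b)
    (ha : ℓ a < ℓ (s i * a)) : bruhatLE cs (s i * a) b := by
  have h1 : bruhatLE cs a (s i * b) := lift2L_fwd cs hb hab ha
  have h2 := Lleft cs h1 ha (by
    rw [show s i * (s i * b) = b from cs.simple_mul_simple_cancel_left i]
    exact hb)
  rwa [show s i * (s i * b) = b from cs.simple_mul_simple_cancel_left i] at h2

end Lifting

end Bruhat

section Parabolic

variable (S : Set B) (Wlam : Subgroup W) (hWlam : Wlam = Subgroup.closure (cs.simple '' S))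
include hWlam

lemma simple_mem_Wlam {j : B} (hj : j ∈ S) : s j ∈ Wlam := by
  rw [hWlam]
  exact Subgroup.subset_closure ⟨j, hj, rfl⟩

lemma wordProd_mem_Wlam {σ : List B} (hσ : ∀ j ∈ σ, j ∈ S) : π σ ∈ Wlam := by
  induction σ with
  | nil => simp [Subgroup.one_mem]
  | cons j σ' ih =>
    rw [cs.wordProd_cons]
    exact Subgroup.mul_mem _ (simple_mem_Wlam cs S Wlam hWlam (hσ j (by simp)))
      (ih fun j' hj' => hσ j' (by simp [hj']))

lemma exists_S_word {y : W} (hy : y ∈ Wlam) :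
    ∃ σ : List B, (∀ j ∈ σ, j ∈ S) ∧ cs.IsReduced σ ∧ π σ = y := by
  have hword : ∃ σ : List B, (∀ j ∈ σ, j ∈ S) ∧ π σ = y := by
    rw [hWlam] at hy
    induction hy using Subgroup.closure_induction with
    | mem z hz =>
      obtain ⟨j, hj, rfl⟩ := hz
      exact ⟨[j], by simpa using hj, cs.wordProd_singleton j⟩
    | one => exact ⟨[], by simp, cs.wordProd_nil⟩
    | mul z₁ z₂ _ _ ih₁ ih₂ =>
      obtain ⟨σ₁, h₁, hp₁⟩ := ih₁
      obtain ⟨σ₂, h₂, hp₂⟩ := ih₂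
      exact ⟨σ₁ ++ σ₂, by
        intro j hj
        rcases List.mem_append.mp hj with h | h
        exacts [h₁ j h, h₂ j h], by rw [cs.wordProd_append, hp₁, hp₂]⟩
    | inv z _ ih =>
      obtain ⟨σ₁, h₁, hp₁⟩ := ih
      exact ⟨σ₁.reverse, fun j hj => h₁ j (List.mem_reverse.mp hj), by
        rw [cs.wordProd_reverse, hp₁]⟩
  obtain ⟨σ₀, hS, hp⟩ := hword
  obtain ⟨σ, hsub, hred, hπ⟩ := exists_reduced_sublist cs σ₀
  exact ⟨σ, fun j hj => hS j (hsub.mem hj), hred, by rw [hπ, hp]⟩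

variable {x : W}

lemma length_minrep_mul' (hx : x ∈ minCosetReps cs Wlam) :
    ∀ (n : ℕ) (y : W), y ∈ Wlam → ℓ y ≤ n → ℓ (x * y) = ℓ x + ℓ y := by
  intro n
  induction n with
  | zero =>
    intro y _ hlen
    rw [cs.length_eq_zero_iff.mp (Nat.le_zero.mp hlen)]
    simp
  | succ n ih =>
    intro y hy hlen
    obtain ⟨σ, hσS, hσred, hσπ⟩ := exists_S_word cs S Wlam hWlam hy
    rcases List.eq_nil_or_concat' σ with rfl | ⟨σ₁, j, rfl⟩
    · rw [← hσπ]
      simp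
    · have hjS : j ∈ S := hσS j (by simp)
      have hσ₁S : ∀ j' ∈ σ₁, j' ∈ S := fun j' hj' => hσS j' (by simp [hj'])
      have hσ₁red : cs.IsReduced σ₁ := by
        have := CoxeterSystem.IsReduced.take hσred σ₁.length
        rwa [List.take_left] at this
      set y₁ := π σ₁ with hy₁
      have hy₁W : y₁ ∈ Wlam := wordProd_mem_Wlam cs S Wlam hWlam hσ₁S
      have hy₁len : ℓ y₁ = σ₁.length := hσ₁red
      have hylen : ℓ y = σ₁.length + 1 := by
        rw [← hσπ, show ℓ (π (σ₁ ++ [j])) = (σ₁ ++ [j]).length from hσred]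
        simp
      have hyy : y = y₁ * s j := by
        rw [← hσπ, cs.wordProd_append, cs.wordProd_singleton]
      have ihy₁ : ℓ (x * y₁) = ℓ x + ℓ y₁ := ih y₁ hy₁W (by omega)
      -- show ascent
      have hasc : ℓ (x * y₁ * s j) = ℓ (x * y₁) + 1 := by
        rcases cs.length_mul_simple (x * y₁) j with h | h
        · exact h
        · exfalso
          -- descent: use strong exchange
          obtain ⟨ωx, hωxred, hωxπ⟩ := cs.exists_reduced_word' x
          have hπcat : π (ωx ++ σ₁) = x * y₁ := by
            rw [cs.wordProd_append, ← hωxπ, hy₁]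
          have hcatred : cs.IsReduced (ωx ++ σ₁) := by
            show ℓ (π (ωx ++ σ₁)) = _
            rw [hπcat, ihy₁, List.length_append, hy₁len,
              show ℓ x = ωx.length from by rw [hωxπ]; exact hωxred]
          have hdesc : ℓ ((x * y₁) * s j) < ℓ (x * y₁) := by omega
          obtain ⟨k, hk, heqk⟩ := strong_exchange cs (cs.isReflection_simple j)
            hdesc (ωx ++ σ₁) hπcat
          rcases lt_or_ge k ωx.length with hkl | hkg
          · have herase : (ωx ++ σ₁).eraseIdx k = ωx.eraseIdx k ++ σ₁ :=
              List.eraseIdx_append_of_lt_length hkl σ₁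
            have hxz : x * (y₁ * s j * y₁⁻¹) = π (ωx.eraseIdx k) := by
              have : x * y₁ * s j = π (ωx.eraseIdx k) * y₁ := by
                rw [heqk, herase, cs.wordProd_append, ← hy₁]
              calc x * (y₁ * s j * y₁⁻¹) = (x * y₁ * s j) * y₁⁻¹ := by group
                _ = π (ωx.eraseIdx k) * y₁ * y₁⁻¹ := by rw [this]
                _ = π (ωx.eraseIdx k) := by group
            have hzW : y₁ * s j * y₁⁻¹ ∈ Wlam :=
              Subgroup.mul_mem _ (Subgroup.mul_mem _ hy₁W
                (simple_mem_Wlam cs S Wlam hWlam hjS)) (Subgroup.inv_mem _ hy₁W)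
            have h1 : ℓ (x * (y₁ * s j * y₁⁻¹)) ≤ ωx.length - 1 := by
              rw [hxz]
              have := cs.length_wordProd_le (ωx.eraseIdx k)
              rw [List.length_eraseIdx_of_lt hkl] at this
              exact this
            have h2 := hx _ hzW
            have h3 : ℓ x = ωx.length := by rw [hωxπ]; exact hωxred
            have h4 : 0 < ωx.length := by omega
            omega
          · have herase : (ωx ++ σ₁).eraseIdx k = ωx ++ σ₁.eraseIdx (k - ωx.length) :=
              List.eraseIdx_append_of_length_le hkg σ₁
            have hy₁s : y₁ * s j = π (σ₁.eraseIdx (k - ωx.length)) := by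
              have : x * y₁ * s j = x * π (σ₁.eraseIdx (k - ωx.length)) := by
                rw [heqk, herase, cs.wordProd_append, ← hωxπ]
              have := mul_left_cancel ((mul_assoc x y₁ (s j)).symm.trans this)
              exact this
            have hkup : k - ωx.length < σ₁.length := by
              rw [List.length_append] at hk
              omega
            have h1 : ℓ (y₁ * s j) ≤ σ₁.length - 1 := by
              rw [hy₁s]
              have := cs.length_wordProd_le (σ₁.eraseIdx (k - ωx.length))
              rw [List.length_eraseIdx_of_lt hkup] at this
              exact this
            rw [← hyy] at h1
            omega
      have hfin : ℓ (y₁ * s j) = σ₁.length + 1 := by rw [← hyy]; exact hylen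
      rw [hyy, ← mul_assoc, hasc, ihy₁, hy₁len, hfin]
      omega

lemma length_minrep_mul (hx : x ∈ minCosetReps cs Wlam) {y : W} (hy : y ∈ Wlam) :
    ℓ (x * y) = ℓ x + ℓ y :=
  length_minrep_mul' cs S Wlam hWlam hx (ℓ y) y hy le_rfl

lemma exists_coset_decomp (u : W) :
    ∃ v c, v ∈ minCosetReps cs Wlam ∧ c ∈ Wlam ∧ u = v * c := by
  have hne : {n : ℕ | ∃ y ∈ Wlam, ℓ (u * y) = n}.Nonempty :=
    ⟨ℓ (u * 1), 1, Subgroup.one_mem _, rfl⟩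
  obtain ⟨y₀, hy₀W, hy₀len⟩ := Nat.sInf_mem hne
  refine ⟨u * y₀, y₀⁻¹, ?_, Subgroup.inv_mem _ hy₀W, by group⟩
  intro z hz
  rw [hy₀len, mul_assoc]
  exact Nat.sInf_le ⟨y₀ * z, Subgroup.mul_mem _ hy₀W hz, rfl⟩

lemma bruhatLE_mul_parabolic {v c : W} (hv : v ∈ minCosetReps cs Wlam)
    (hc : c ∈ Wlam) : bruhatLE cs v (v * c) := by
  obtain ⟨σ, hσS, hσred, hσπ⟩ := exists_S_word cs S Wlam hWlam hc
  rw [← hσπ]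
  clear hσπ hc
  induction σ using List.reverseRecOn with
  | nil => simpa using bruhatLE_refl cs v
  | append_singleton σ₁ j ih =>
    have hσ₁S : ∀ j' ∈ σ₁, j' ∈ S := fun j' hj' => hσS j' (by simp [hj'])
    have hσ₁red : cs.IsReduced σ₁ := by
      have := CoxeterSystem.IsReduced.take hσred σ₁.length
      rwa [List.take_left] at this
    have h1 : bruhatLE cs v (v * π σ₁) := ih hσ₁S hσ₁red
    have hstep : bruhatLE cs (v * π σ₁) (v * π (σ₁ ++ [j])) := by
      rw [cs.wordProd_append, cs.wordProd_singleton, ← mul_assoc]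
      apply bruhatLE_step_simple cs
      have l1 : ℓ (v * π σ₁) = ℓ v + σ₁.length :=
        (length_minrep_mul cs S Wlam hWlam hv
          (wordProd_mem_Wlam cs S Wlam hWlam hσ₁S)).trans (by rw [hσ₁red])
      have l2 : ℓ (v * π σ₁ * s j) = ℓ v + (σ₁ ++ [j]).length := by
        rw [mul_assoc, ← cs.wordProd_singleton, ← cs.wordProd_append]
        rw [length_minrep_mul cs S Wlam hWlam hv
          (wordProd_mem_Wlam cs S Wlam hWlam hσS), hσred]
      rw [List.length_append, List.length_singleton] at l2
      omega
    exact bruhatLE_trans cs h1 hstep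

lemma minrep_of_simple_mul_desc (hx : x ∈ minCosetReps cs Wlam) {i₀ : B}
    (hdesc : ℓ (s i₀ * x) < ℓ x) : (s i₀ * x) ∈ minCosetReps cs Wlam := by
  intro y hy
  have h1 : ℓ (s i₀ * x) + 1 = ℓ x := by
    rcases cs.length_simple_mul x i₀ with h | h <;> omega
  have h2 : ℓ (x * y) ≤ ℓ (s i₀ * (x * y)) + 1 := by
    rcases cs.length_simple_mul (x * y) i₀ with h | h <;> omega
  have h3 : ℓ (x * y) = ℓ x + ℓ y := length_minrep_mul cs S Wlam hWlam hx hy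
  rw [← mul_assoc] at h2
  omega

lemma deodhar_trichotomy (hx : x ∈ minCosetReps cs Wlam) {i₀ : B}
    (hasc : ℓ x < ℓ (s i₀ * x)) :
    (s i₀ * x) ∈ minCosetReps cs Wlam ∨ ∃ j ∈ S, s i₀ * x = x * s j := by
  by_cases hmin : (s i₀ * x) ∈ minCosetReps cs Wlam
  · exact Or.inl hmin
  right
  obtain ⟨v, c, hv, hc, hvc⟩ := exists_coset_decomp cs S Wlam hWlam (s i₀ * x)
  have hadd : ℓ (s i₀ * x) = ℓ v + ℓ c :=
    hvc ▸ length_minrep_mul cs S Wlam hWlam hv hc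
  have hcne : c ≠ 1 := by
    rintro rfl
    rw [mul_one] at hvc
    exact hmin (hvc ▸ hv)
  obtain ⟨σ, hσS, hσred, hσπ⟩ := exists_S_word cs S Wlam hWlam hc
  rcases List.eq_nil_or_concat' σ with rfl | ⟨σ₁, j, rfl⟩
  · exact absurd (by rw [← hσπ]; simp) hcne
  have hjS : j ∈ S := hσS j (by simp)
  have hσ₁S : ∀ j' ∈ σ₁, j' ∈ S := fun j' hj' => hσS j' (by simp [hj'])
  have hσ₁red : cs.IsReduced σ₁ := by
    have := CoxeterSystem.IsReduced.take hσred σ₁.length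
    rwa [List.take_left] at this
  have hcsj : c * s j = π σ₁ := by
    rw [← hσπ, cs.wordProd_append, cs.wordProd_singleton,
      cs.simple_mul_simple_cancel_right]
  have hdesc : ℓ ((s i₀ * x) * s j) < ℓ (s i₀ * x) := by
    have h1 : (s i₀ * x) * s j = v * (c * s j) := by rw [hvc, mul_assoc]
    have h2 : ℓ (v * (c * s j)) = ℓ v + σ₁.length := by
      rw [hcsj, length_minrep_mul cs S Wlam hWlam hv
        (wordProd_mem_Wlam cs S Wlam hWlam hσ₁S), hσ₁red]
    have h3 : ℓ c = σ₁.length + 1 := by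
      rw [← hσπ, show ℓ (π (σ₁ ++ [j])) = (σ₁ ++ [j]).length from hσred]
      simp
    rw [h1, h2]
    omega
  obtain ⟨ωx, hωxred, hωxπ⟩ := cs.exists_reduced_word' x
  have hπcons : π (i₀ :: ωx) = s i₀ * x := by rw [cs.wordProd_cons, hωxπ]
  obtain ⟨k, hk, heqk⟩ := strong_exchange cs (cs.isReflection_simple j) hdesc
    (i₀ :: ωx) hπcons
  cases k with
  | zero =>
    refine ⟨j, hjS, ?_⟩
    have : s i₀ * x * s j = x := by
      rw [heqk]
      show π ((i₀ :: ωx).eraseIdx 0) = x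
      rw [List.eraseIdx_cons_zero, hωxπ]
    calc s i₀ * x = (s i₀ * x * s j) * s j := by
          rw [cs.simple_mul_simple_cancel_right]
      _ = x * s j := by rw [this]
  | succ k' =>
    exfalso
    have herase : (i₀ :: ωx).eraseIdx (k' + 1) = i₀ :: ωx.eraseIdx k' := rfl
    have hxsj : x * s j = π (ωx.eraseIdx k') := by
      have h1 : s i₀ * x * s j = s i₀ * π (ωx.eraseIdx k') := by
        rw [heqk, herase, cs.wordProd_cons]
      have := mul_left_cancel ((mul_assoc (s i₀) x (s j)).symm.trans h1)
      rw [← this]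
    have hk' : k' < ωx.length := by
      simp only [List.length_cons] at hk
      omega
    have h1 : ℓ (x * s j) ≤ ωx.length - 1 := by
      rw [hxsj]
      have := cs.length_wordProd_le (ωx.eraseIdx k')
      rw [List.length_eraseIdx_of_lt hk'] at this
      exact this
    have h2 : ℓ x = ωx.length := by rw [hωxπ]; exact hωxred
    have h3 := hx (s j) (simple_mem_Wlam cs S Wlam hWlam hjS)
    omega

end Parabolic

section Main

variable (S : Set B) (Wlam : Subgroup W) (hWlam : Wlam = Subgroup.closure (cs.simple '' S))
include hWlam

theorem deodhar_main : ∀ (n : ℕ) (w : W), ℓ w ≤ n → ∀ x, x ∈ minCosetReps cs Wlam →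
    (∃ y₀ ∈ Wlam, bruhatLE cs (x * y₀) w) →
    ∃ u, u ∈ Wlam ∧ bruhatLE cs (x * u) w ∧
      ∀ z ∈ Wlam, bruhatLE cs (x * z) w → bruhatLE cs z u := by
  intro n
  induction n with
  | zero =>
    intro w hw x hx ⟨y₀, hy₀W, hy₀le⟩
    have hw1 : w = 1 := cs.length_eq_zero_iff.mp (Nat.le_zero.mp hw)
    subst hw1
    have h0 : ℓ (x * y₀) = 0 := by
      have := length_le_of_bruhatLE cs hy₀le
      simpa using this
    have hadd : ℓ x + ℓ y₀ = 0 := by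
      rw [← length_minrep_mul cs S Wlam hWlam hx hy₀W]
      exact h0
    have hx1 : x = 1 := cs.length_eq_zero_iff.mp (by omega)
    refine ⟨1, Subgroup.one_mem _, by
      rw [mul_one, hx1]; exact bruhatLE_refl cs 1, ?_⟩
    intro z hz hzle
    have : ℓ (x * z) = 0 := by
      have := length_le_of_bruhatLE cs hzle
      simpa using this
    rw [hx1, one_mul] at this
    rw [cs.length_eq_zero_iff.mp this]
    exact bruhatLE_refl cs 1
  | succ n ih =>
    intro w hw x hx hne
    by_cases hwn : ℓ w ≤ n
    · exact ih w hwn x hx hne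
    obtain ⟨y₀, hy₀W, hy₀le⟩ := hne
    have hw1 : w ≠ 1 := by
      intro h
      rw [h] at hwn
      simp at hwn
    obtain ⟨i₀, hdesc'⟩ := cs.exists_leftDescent_of_ne_one hw1
    have hdesc : ℓ (s i₀ * w) < ℓ w := hdesc'
    have hw₁len : ℓ (s i₀ * w) + 1 = ℓ w := by
      rcases cs.length_simple_mul w i₀ with h | h <;> omega
    have hw₁n : ℓ (s i₀ * w) ≤ n := by omega
    rcases Nat.lt_or_ge (ℓ (s i₀ * x)) (ℓ x) with hgt | hge
    · -- Case A : descent of x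
      have hx' := minrep_of_simple_mul_desc cs S Wlam hWlam hx hgt
      have hxlen : ℓ (s i₀ * x) + 1 = ℓ x := by
        rcases cs.length_simple_mul x i₀ with h | h <;> omega
      have hkey : ∀ y ∈ Wlam, ℓ (s i₀ * (x * y)) < ℓ (x * y) := by
        intro y hy
        rw [← mul_assoc, length_minrep_mul cs S Wlam hWlam hx hy,
          length_minrep_mul cs S Wlam hWlam hx' hy]
        omega
      have hfwd : ∀ y ∈ Wlam, bruhatLE cs (x * y) w →
          bruhatLE cs ((s i₀ * x) * y) (s i₀ * w) := by
        intro y hy hle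
        have := lift1L_fwd cs hdesc hle (hkey y hy)
        rwa [← mul_assoc] at this
      have hbwd : ∀ y ∈ Wlam, bruhatLE cs ((s i₀ * x) * y) (s i₀ * w) →
          bruhatLE cs (x * y) w := by
        intro y hy hle
        apply lift1L_rev cs hdesc (hkey y hy)
        rwa [← mul_assoc]
      obtain ⟨u, huW, hule, hudom⟩ := ih (s i₀ * w) hw₁n (s i₀ * x) hx'
        ⟨y₀, hy₀W, hfwd y₀ hy₀W hy₀le⟩
      exact ⟨u, huW, hbwd u huW hule,
        fun z hz hzle => hudom z hz (hfwd z hz hzle)⟩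
    · have hlt : ℓ x < ℓ (s i₀ * x) :=
        lt_of_le_of_ne hge (Ne.symm (cs.length_simple_mul_ne x i₀))
      have hxlen : ℓ (s i₀ * x) = ℓ x + 1 := by
        rcases cs.length_simple_mul x i₀ with h | h <;> omega
      rcases deodhar_trichotomy cs S Wlam hWlam hx hlt with hmin | ⟨j, hjS, hcomm⟩
      · -- Case B1 : s i₀ * x is a minimal coset representative
        have hkey : ∀ y ∈ Wlam, ℓ (x * y) < ℓ (s i₀ * (x * y)) := by
          intro y hy
          rw [← mul_assoc, length_minrep_mul cs S Wlam hWlam hx hy,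
            length_minrep_mul cs S Wlam hWlam hmin hy]
          omega
        have hfwd : ∀ y ∈ Wlam, bruhatLE cs (x * y) w →
            bruhatLE cs (x * y) (s i₀ * w) := fun y hy hle =>
          lift2L_fwd cs hdesc hle (hkey y hy)
        obtain ⟨u, huW, hule, hudom⟩ := ih (s i₀ * w) hw₁n x hx
          ⟨y₀, hy₀W, hfwd y₀ hy₀W hy₀le⟩
        exact ⟨u, huW, lift2L_rev cs hdesc hule,
          fun z hz hzle => hudom z hz (hfwd z hz hzle)⟩
      · -- Case B2 : s i₀ * x = x * s j with j ∈ S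
        have hswap : ∀ y : W, s i₀ * (x * y) = x * (s j * y) := by
          intro y
          rw [← mul_assoc, hcomm, mul_assoc]
        have hsjW : s j ∈ Wlam := simple_mem_Wlam cs S Wlam hWlam hjS
        have hlsj : ∀ y : W, s j * (s j * y) = y := fun y =>
          cs.simple_mul_simple_cancel_left j
        -- length computations
        have hlen2 : ∀ y ∈ Wlam, ℓ (x * (s j * y)) = ℓ x + ℓ (s j * y) := by
          intro y hy
          exact length_minrep_mul cs S Wlam hWlam hx (Subgroup.mul_mem _ hsjW hy)
        have hlen1 : ∀ y ∈ Wlam, ℓ (x * y) = ℓ x + ℓ y := fun y hy =>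
          length_minrep_mul cs S Wlam hWlam hx hy
        -- forward into the smaller interval
        have hfwd : ∀ y ∈ Wlam, bruhatLE cs (x * y) w →
            (ℓ y < ℓ (s j * y) → bruhatLE cs (x * y) (s i₀ * w)) ∧
            (ℓ (s j * y) < ℓ y → bruhatLE cs (x * (s j * y)) (s i₀ * w)) := by
          intro y hy hle
          constructor
          · intro hyasc
            apply lift2L_fwd cs hdesc hle
            rw [hswap, hlen2 y hy, hlen1 y hy]
            omega
          · intro hydesc
            have := lift1L_fwd cs hdesc hle (by
              rw [hswap, hlen2 y hy, hlen1 y hy]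
              omega)
            rwa [hswap] at this
        have hBne : ∃ y₁ ∈ Wlam, bruhatLE cs (x * y₁) (s i₀ * w) := by
          rcases Nat.lt_or_ge (ℓ (s j * y₀)) (ℓ y₀) with hc | hc
          · exact ⟨s j * y₀, Subgroup.mul_mem _ hsjW hy₀W,
              (hfwd y₀ hy₀W hy₀le).2 hc⟩
          · have : ℓ y₀ < ℓ (s j * y₀) :=
              lt_of_le_of_ne hc (Ne.symm (cs.length_simple_mul_ne y₀ j))
            exact ⟨y₀, hy₀W, (hfwd y₀ hy₀W hy₀le).1 this⟩
        obtain ⟨u', huW', hule', hudom'⟩ := ih (s i₀ * w) hw₁n x hx hBne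
        by_cases hup : ℓ u' < ℓ (s j * u')
        · -- maximal element is s j * u'
          refine ⟨s j * u', Subgroup.mul_mem _ hsjW huW', ?_, ?_⟩
          · -- x * (s j * u') ≤ w
            have e1 : s i₀ * (x * (s j * u')) = x * u' := by
              rw [hswap (s j * u'), hlsj u']
            apply lift1L_rev cs hdesc (a := x * (s j * u'))
            · rw [e1, hlen2 u' huW', hlen1 u' huW']
              omega
            · rw [e1]
              exact hule'
          · intro z hz hzle
            rcases Nat.lt_or_ge (ℓ (s j * z)) (ℓ z) with hc | hc
            · have h1 : bruhatLE cs (x * (s j * z)) (s i₀ * w) :=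
                (hfwd z hz hzle).2 hc
              have h2 := hudom' (s j * z) (Subgroup.mul_mem _ hsjW hz) h1
              have h3 := Lleft cs h2 (i := j) (by rw [hlsj z]; exact hc) hup
              rwa [hlsj z] at h3
            · have hzasc : ℓ z < ℓ (s j * z) :=
                lt_of_le_of_ne hc (Ne.symm (cs.length_simple_mul_ne z j))
              have h1 := hudom' z hz ((hfwd z hz hzle).1 hzasc)
              exact bruhatLE_trans cs h1 (mul_simple_step' cs hup)
        · push_neg at hup
          have hdn : ℓ (s j * u') < ℓ u' :=
            lt_of_le_of_ne hup (cs.length_simple_mul_ne u' j)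
          refine ⟨u', huW', lift2L_rev cs hdesc hule', ?_⟩
          intro z hz hzle
          rcases Nat.lt_or_ge (ℓ (s j * z)) (ℓ z) with hc | hc
          · have h1 : bruhatLE cs (x * (s j * z)) (s i₀ * w) :=
              (hfwd z hz hzle).2 hc
            have h2 := hudom' (s j * z) (Subgroup.mul_mem _ hsjW hz) h1
            have h3 := b2L cs hdn h2 (by rw [hlsj z]; exact hc)
            rwa [hlsj z] at h3
          · have hzasc : ℓ z < ℓ (s j * z) :=
              lt_of_le_of_ne hc (Ne.symm (cs.length_simple_mul_ne z j))
            exact hudom' z hz ((hfwd z hz hzle).1 hzasc)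

end Main

end DeodharAux

/-- Deodhar's lemma: in the Weyl group `W` with standard parabolic
subgroup `W_λ` (the stabilizer of a dominant weight `λ`), for any `w ∈ W` and any
`x ∈ W^λ` with `x ≤ w` in the Bruhat order on `W/W_λ` (i.e. `x ≤ w'`, the minimal
representative of `w W_λ`), the set `{ y ∈ W_λ : x y ≤ w }` admits a unique maximal
element. -/
theorem deodhar_unique_maximal
    {B W : Type*} [Group W] {M : CoxeterMatrix B} (cs : CoxeterSystem M W)
    (S : Set B) (Wlam : Subgroup W) (hWlam : Wlam = Subgroup.closure (cs.simple '' S))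
    (w x w' : W)
    (hx : x ∈ minCosetReps cs Wlam)
    (hw' : w' ∈ minCosetReps cs Wlam) (hw'coset : w⁻¹ * w' ∈ Wlam)
    (hxw : bruhatLE cs x w') :
    ∃! y : W, y ∈ Wlam ∧ bruhatLE cs (x * y) w ∧
      ∀ z ∈ Wlam, bruhatLE cs (x * z) w → bruhatLE cs z y := by
  have hc : w'⁻¹ * w ∈ Wlam := by
    have := Subgroup.inv_mem Wlam hw'coset
    rwa [mul_inv_rev, inv_inv] at this
  have hw'w : bruhatLE cs w' w := by
    have := DeodharAux.bruhatLE_mul_parabolic cs S Wlam hWlam hw' hc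
    rwa [show w' * (w'⁻¹ * w) = w by group] at this
  have hxw'' : bruhatLE cs x w := DeodharAux.bruhatLE_trans cs hxw hw'w
  obtain ⟨u, huW, hule, hudom⟩ := DeodharAux.deodhar_main cs S Wlam hWlam
    (cs.length w) w le_rfl x hx ⟨1, Subgroup.one_mem _, by rwa [mul_one]⟩
  refine ⟨u, ⟨huW, hule, hudom⟩, ?_⟩
  rintro y ⟨hyW, hyle, hydom⟩
  exact DeodharAux.bruhatLE_antisymm cs (hudom y hyW hyle) (hydom u huW hule)
end

section
/- For the Grassmannian X of r-planes in k^n with Plücker line bundle L, the standard monomials of degree m, i.e. the products p_{I₁} p_{I₂} ⋯ p_{I_m} with I₁ ≤ I₂ ≤ ⋯ ≤ I_m in the componentwise order on strictly increasing r-tuples, are linearly independent in H⁰(X, L^{⊗m}). -/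
open scoped Classical

/-- The Plücker coordinate `p_I`, realized in the homogeneous coordinate ring of the
Grassmannian of `r`-planes in `k^n` (a subalgebra of the polynomial ring on a generic
`r × n` matrix) as the `r × r` minor on the columns indexed by the strictly
increasing tuple `I`. -/
noncomputable def pluecker (k : Type*) [CommRing k] (n r : ℕ)
    (I : {f : Fin r → Fin n // StrictMono f}) : MvPolynomial (Fin r × Fin n) k :=
  (Matrix.of fun a b : Fin r => MvPolynomial.X (a, I.1 b)).det

namespace StdMono

open AddMonoidAlgebra Finset MvPolynomial

variable {n r : ℕ}

/-- exponent of the monomial of `det` corresponding to a permutation `σ`. -/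
noncomputable def pexp (σ : Equiv.Perm (Fin r)) (I : Fin r → Fin n) :
    (Fin r × Fin n) →₀ ℕ :=
  ∑ i : Fin r, Finsupp.single (σ i, I i) 1

/-- The target of the monomial "degree" map: lex order on exponents, with the
variables ordered lexicographically. -/
abbrev B (n r : ℕ) := Lex ((Lex (Fin r × Fin n)) →₀ ℕ)

noncomputable def DD : ((Fin r × Fin n) →₀ ℕ) → B n r :=
  fun d => toLex ((Finsupp.domCongr (toLex : (Fin r × Fin n) ≃ Lex (Fin r × Fin n))) d)

lemma DD_inj : Function.Injective (DD (n := n) (r := r)) := fun a b h =>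
  (Finsupp.domCongr (toLex : (Fin r × Fin n) ≃ Lex (Fin r × Fin n))).injective
    (toLex.injective h)

lemma DD_add (a b : (Fin r × Fin n) →₀ ℕ) : DD (a + b) = DD a + DD b := by
  unfold DD
  rw [map_add]
  rfl

lemma DD_apply (d : (Fin r × Fin n) →₀ ℕ) (x : Lex (Fin r × Fin n)) :
    ofLex (DD d) x = d (ofLex x) := by
  simp [DD, Finsupp.domCongr, Finsupp.equivMapDomain_apply]

lemma pexp_apply (σ : Equiv.Perm (Fin r)) (I : Fin r → Fin n) (x : Fin r × Fin n) :
    pexp σ I x = ∑ i : Fin r, if (σ i, I i) = x then 1 else 0 := by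
  rw [pexp, Finsupp.finset_sum_apply]
  exact Finset.sum_congr rfl fun i _ => Finsupp.single_apply

lemma pexp_one_apply (I : Fin r → Fin n) (a : Fin r) (b : Fin n) :
    pexp 1 I (a, b) = if I a = b then 1 else 0 := by
  rw [pexp_apply]
  have : ∀ i : Fin r, (if ((1 : Equiv.Perm (Fin r)) i, I i) = (a, b) then (1:ℕ) else 0)
      = if i = a then (if I a = b then 1 else 0) else 0 := by
    intro i
    rcases eq_or_ne i a with rfl | hne
    · simp [Prod.ext_iff]
    · simp [Prod.ext_iff, hne]
  rw [Finset.sum_congr rfl fun i _ => this i, Finset.sum_ite_eq' univ a]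
  simp

set_option maxHeartbeats 1000000 in
lemma pexp_lt {I : Fin r → Fin n} (hI : StrictMono I) {σ : Equiv.Perm (Fin r)}
    (hσ : σ ≠ 1) : DD (pexp σ I) < DD (pexp 1 I) := by
  have hS : (univ.filter fun i : Fin r => σ i ≠ i).Nonempty := by
    by_contra h
    rw [Finset.not_nonempty_iff_eq_empty, Finset.filter_eq_empty_iff] at h
    exact hσ (Equiv.ext fun i => by simpa using h (mem_univ i))
  set a₀ := (univ.filter fun i : Fin r => σ i ≠ i).min' hS with ha₀def
  have ha₀ : σ a₀ ≠ a₀ := by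
    have := Finset.min'_mem _ hS
    rw [Finset.mem_filter] at this
    exact this.2
  have hmin : ∀ i, σ i ≠ i → a₀ ≤ i := fun i hi =>
    Finset.min'_le (univ.filter fun i : Fin r => σ i ≠ i) i
      (Finset.mem_filter.2 ⟨mem_univ _, hi⟩)
  have hfix : ∀ i, i < a₀ → σ i = i := fun i h =>
    by_contra fun hne => absurd (hmin i hne) (not_le.2 h)
  rw [show DD (pexp σ I) < DD (pexp 1 I) ↔ _ from Finsupp.Lex.lt_iff]
  refine ⟨toLex (a₀, I a₀), fun j hj => ?_, ?_⟩
  · -- positions before the witness agree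
    obtain ⟨a, b, rfl⟩ : ∃ a b, j = toLex (a, b) := ⟨(ofLex j).1, (ofLex j).2, rfl⟩
    have hj' : a < a₀ ∨ a = a₀ ∧ b < I a₀ := (Prod.Lex.lt_iff (x := toLex (a, b)) (y := toLex (a₀, I a₀))).1 hj
    rw [DD_apply, DD_apply, ofLex_toLex, pexp_apply, pexp_apply]
    rcases hj' with hj' | ⟨rfl, hj'⟩
    · -- a < a₀
      refine Finset.sum_congr rfl fun i _ => if_congr ?_ rfl rfl
      constructor
      · rintro h
        simp only [Prod.mk.injEq, Equiv.Perm.one_apply] at h ⊢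
        refine ⟨?_, h.2⟩
        have : σ i = σ a := by rw [h.1, hfix a hj']
        exact σ.injective this
      · rintro h
        simp only [Prod.mk.injEq, Equiv.Perm.one_apply] at h ⊢
        exact ⟨by rw [h.1, hfix a hj'], h.2⟩
    · -- a = a₀, b < I a₀
      rw [Finset.sum_eq_zero, Finset.sum_eq_zero]
      · intro i _
        rw [if_neg]
        rintro h
        simp only [Prod.mk.injEq, Equiv.Perm.one_apply] at h
        have hia : i = a₀ := h.1
        exact absurd (hia ▸ h.2) hj'.ne'
      · intro i _
        rw [if_neg]
        rintro h
        simp only [Prod.mk.injEq] at h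
        have hi : σ i = a₀ := h.1
        have hne : i ≠ a₀ := fun he => ha₀ (he ▸ hi)
        have hmoved : σ i ≠ i := fun he => hne (by rw [← hi, he])
        have : a₀ < i := lt_of_le_of_ne (hmin i hmoved) (Ne.symm hne)
        exact absurd h.2 (hj'.trans (hI this)).ne'
  · -- strict inequality at the witness
    rw [DD_apply, DD_apply, ofLex_toLex, pexp_apply, pexp_apply]
    have h0 : (∑ i : Fin r, if (σ i, I i) = (a₀, I a₀) then 1 else 0) = 0 := by
      refine Finset.sum_eq_zero fun i _ => ?_
      rw [if_neg]
      rintro h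
      simp only [Prod.mk.injEq] at h
      exact ha₀ (hI.injective h.2 ▸ h.1)
    have h1 : (∑ i : Fin r, if ((1 : Equiv.Perm (Fin r)) i, I i) = (a₀, I a₀) then 1 else 0)
        = 1 := by
      have : ∀ i : Fin r, (if ((1 : Equiv.Perm (Fin r)) i, I i) = (a₀, I a₀) then (1:ℕ) else 0)
          = if i = a₀ then 1 else 0 := by
        intro i
        rcases eq_or_ne i a₀ with rfl | hne
        · simp
        · simp [Prod.ext_iff, hne]
      rw [Finset.sum_congr rfl fun i _ => this i, Finset.sum_ite_eq' univ a₀]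
      simp
    rw [h0, h1]
    exact Nat.zero_lt_one

variable {k : Type*} [Field k]

lemma prod_X_eq (g : Fin r → Fin r × Fin n) :
    (∏ i : Fin r, (X (g i) : MvPolynomial (Fin r × Fin n) k))
      = monomial (∑ i : Fin r, Finsupp.single (g i) 1) 1 := by
  classical
  induction (univ : Finset (Fin r)) using Finset.cons_induction with
  | empty => simp
  | cons a s ha ih =>
      rw [Finset.prod_cons, Finset.sum_cons, ih, X, monomial_mul, one_mul]

lemma pluecker_eq (I : {f : Fin r → Fin n // StrictMono f}) :
    pluecker k n r I
      = ∑ σ : Equiv.Perm (Fin r),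
          Equiv.Perm.sign σ • (monomial (pexp σ I.1) (1 : k)) := by
  rw [pluecker, Matrix.det_apply]
  refine Finset.sum_congr rfl fun σ _ => ?_
  congr 1
  exact prod_X_eq fun i => (σ i, I.1 i)

lemma sign_smul_supDegree (σ : Equiv.Perm (Fin r)) (e : (Fin r × Fin n) →₀ ℕ) :
    supDegree (DD (n := n) (r := r))
        (Equiv.Perm.sign σ • (monomial e (1 : k))) = DD e := by
  rcases Int.units_eq_one_or (Equiv.Perm.sign σ) with h | h <;> rw [h]
  · rw [one_smul, ← single_eq_monomial, supDegree_single_ne_zero _ one_ne_zero]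
  · rw [Units.smul_def, Units.val_neg, Units.val_one, neg_one_smul, supDegree_neg,
      ← single_eq_monomial, supDegree_single_ne_zero _ one_ne_zero]

lemma pluecker_supDegree_monic (I : {f : Fin r → Fin n // StrictMono f}) :
    supDegree (DD (n := n) (r := r)) (pluecker k n r I) = DD (pexp 1 I.1)
      ∧ Monic (DD (n := n) (r := r)) (pluecker k n r I) := by
  have hmax : ∀ σ ∈ (univ : Finset (Equiv.Perm (Fin r))), σ ≠ 1 →
      supDegree (DD (n := n) (r := r))
          (Equiv.Perm.sign σ • (monomial (pexp σ I.1) (1 : k)))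
        < supDegree (DD (n := n) (r := r))
          (Equiv.Perm.sign (1 : Equiv.Perm (Fin r)) • (monomial (pexp 1 I.1) (1 : k))) := by
    intro σ _ hσ
    rw [sign_smul_supDegree, sign_smul_supDegree]
    exact pexp_lt I.2 hσ
  have := supDegree_leadingCoeff_sum_eq (D := DD (n := n) (r := r))
    (s := (univ : Finset (Equiv.Perm (Fin r))))
    (f := fun σ => Equiv.Perm.sign σ • (monomial (pexp σ I.1) (1 : k)))
    (mem_univ 1) hmax
  rw [← pluecker_eq] at this
  obtain ⟨h1, h2⟩ := this
  simp only [Equiv.Perm.sign_one, one_smul] at h1 h2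
  refine ⟨by rw [h1, ← single_eq_monomial, supDegree_single_ne_zero _ one_ne_zero], ?_⟩
  rw [Monic, h2, ← single_eq_monomial, leadingCoeff_single (DD_inj (n := n) (r := r))]

lemma prod_pluecker_supDegree_monic {m : ℕ} (c : Fin m → {f : Fin r → Fin n // StrictMono f}) :
    supDegree (DD (n := n) (r := r)) (∏ i : Fin m, pluecker k n r (c i))
        = DD (∑ i : Fin m, pexp 1 (c i).1)
      ∧ Monic (DD (n := n) (r := r)) (∏ i : Fin m, pluecker k n r (c i)) := by
  classical
  induction (univ : Finset (Fin m)) using Finset.cons_induction with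
  | empty =>
      constructor
      · rw [Finset.prod_empty, Finset.sum_empty, AddMonoidAlgebra.one_def,
          supDegree_single_ne_zero _ (one_ne_zero (α := k))]
      · rw [Finset.prod_empty]
        exact monic_one (DD_inj (n := n) (r := r))
  | cons a s ha ih =>
      obtain ⟨ih1, ih2⟩ := ih
      obtain ⟨hp1, hp2⟩ := pluecker_supDegree_monic (k := k) (n := n) (r := r) (c a)
      constructor
      · rw [Finset.prod_cons, Finset.sum_cons,
          Monic.supDegree_mul_of_ne_zero_left (DD_inj (n := n) (r := r)) DD_add ih2
            (hp2.ne_zero), hp1, ih1, DD_add]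
      · rw [Finset.prod_cons]
        exact Monic.mul (DD_inj (n := n) (r := r)) DD_add hp2 ih2

/-- a monotone function `Fin m → Fin n` is determined by its fiber cardinalities. -/
lemma monotone_eq_of_card_fibers {m' : ℕ} {f g : Fin m' → Fin n}
    (hf : Monotone f) (hg : Monotone g)
    (h : ∀ b, (univ.filter fun i => f i = b).card = (univ.filter fun i => g i = b).card) :
    f = g := by
  have key : ∀ (f : Fin m' → Fin n), Monotone f → ∀ i b,
      (f i ≤ b ↔ (i : ℕ) < (univ.filter fun j => f j ≤ b).card) := by
    intro f hf i b
    constructor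
    · intro hfi
      have hsub : Finset.Iic i ⊆ univ.filter fun j => f j ≤ b := fun j hj =>
        Finset.mem_filter.2 ⟨mem_univ _, (hf (Finset.mem_Iic.1 hj)).trans hfi⟩
      have := Finset.card_le_card hsub
      rw [Fin.card_Iic] at this
      omega
    · intro hlt
      by_contra hfi
      have hsub : (univ.filter fun j => f j ≤ b) ⊆ Finset.Iio i := by
        intro j hj
        rw [Finset.mem_filter] at hj
        rw [Finset.mem_Iio]
        by_contra hij
        exact hfi (le_trans (hf (not_lt.1 hij)) hj.2)
      have := Finset.card_le_card hsub
      rw [Fin.card_Iio] at this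
      omega
  have hle : ∀ b, (univ.filter fun i => f i ≤ b).card = (univ.filter fun i => g i ≤ b).card := by
    intro b
    have hcount : ∀ (f : Fin m' → Fin n),
        (univ.filter fun i => f i ≤ b).card
          = ∑ b' ∈ Finset.Iic b, (univ.filter fun i => f i = b').card := by
      intro f
      rw [Finset.card_eq_sum_card_fiberwise
        (f := f) (t := Finset.Iic b)
        (fun i hi => Finset.mem_Iic.2 (Finset.mem_filter.1 hi).2)]
      refine Finset.sum_congr rfl fun b' hb' => ?_
      congr 1
      rw [Finset.filter_filter]
      refine Finset.filter_congr fun i _ => ?_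
      constructor
      · rintro ⟨-, h2⟩; exact h2
      · intro h2; exact ⟨h2 ▸ Finset.mem_Iic.1 hb', h2⟩
    rw [hcount f, hcount g]
    exact Finset.sum_congr rfl fun b' _ => h b'
  funext i
  have h1 : f i ≤ g i := by
    rw [key f hf, hle]
    rw [← key g hg]
  have h2 : g i ≤ f i := by
    rw [key g hg, ← hle]
    rw [← key f hf]
  exact le_antisymm h1 h2

lemma sum_pexp_injective {m : ℕ} :
    Function.Injective
      (fun c : {c : Fin m → {f : Fin r → Fin n // StrictMono f} //
          ∀ i j : Fin m, i ≤ j → ∀ l : Fin r, (c i).1 l ≤ (c j).1 l} =>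
        ∑ i : Fin m, pexp (1 : Equiv.Perm (Fin r)) ((c.1 i)).1) := by
  intro c c' h
  have happ : ∀ (a : Fin r) (b : Fin n),
      (univ.filter fun i => (c.1 i).1 a = b).card
        = (univ.filter fun i => (c'.1 i).1 a = b).card := by
    intro a b
    have := congrArg (fun d : (Fin r × Fin n) →₀ ℕ => d (a, b)) h
    simp only [Finsupp.finset_sum_apply] at this
    rw [Finset.card_filter, Finset.card_filter]
    calc ∑ i : Fin m, (if (c.1 i).1 a = b then 1 else 0)
        = ∑ i : Fin m, pexp 1 ((c.1 i)).1 (a, b) := by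
          exact Finset.sum_congr rfl fun i _ => (pexp_one_apply _ a b).symm
      _ = ∑ i : Fin m, pexp 1 ((c'.1 i)).1 (a, b) := this
      _ = ∑ i : Fin m, (if (c'.1 i).1 a = b then 1 else 0) :=
          Finset.sum_congr rfl fun i _ => pexp_one_apply _ a b
  have : ∀ a : Fin r, (fun i => (c.1 i).1 a) = fun i => (c'.1 i).1 a := by
    intro a
    refine monotone_eq_of_card_fibers ?_ ?_ (fun b => happ a b)
    · exact fun i j hij => c.2 i j hij a
    · exact fun i j hij => c'.2 i j hij a
  refine Subtype.ext (funext fun i => Subtype.ext (funext fun a => ?_))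
  exact congrFun (this a) i

lemma linearIndependent_of_supDegree_injective {ι : Type*}
    (f : ι → MvPolynomial (Fin r × Fin n) k)
    (h0 : ∀ i, f i ≠ 0)
    (hinj : Function.Injective fun i => supDegree (DD (n := n) (r := r)) (f i)) :
    LinearIndependent k f := by
  rw [linearIndependent_iff']
  intro s g hsum i hi
  by_contra hgi
  have hmem : i ∈ s.filter fun j => g j ≠ 0 := Finset.mem_filter.2 ⟨hi, hgi⟩
  have hsum' : ∑ j ∈ s.filter (fun j => g j ≠ 0), g j • f j = 0 := by
    rw [Finset.sum_subset (Finset.filter_subset _ s) ?_]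
    · exact hsum
    · intro x hx hnx
      have hz : g x = 0 := by
        by_contra hgx
        exact hnx (Finset.mem_filter.2 ⟨hx, hgx⟩)
      rw [hz, zero_smul]
  have hDeq : ∀ j ∈ s.filter fun j => g j ≠ 0,
      supDegree (DD (n := n) (r := r)) (g j • f j)
        = supDegree (DD (n := n) (r := r)) (f j) := by
    intro j hj
    have hgj : g j ≠ 0 := (Finset.mem_filter.1 hj).2
    unfold AddMonoidAlgebra.supDegree
    congr 1
    exact Finsupp.support_smul_eq hgj
  refine absurd hsum' ?_
  refine sum_ne_zero_of_injOn_supDegree' (D := DD (n := n) (r := r))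
    ⟨i, hmem, smul_ne_zero hgi (h0 i)⟩ ?_
  intro j1 hj1 j2 hj2 he
  simp only [Function.comp] at he
  rw [hDeq j1 hj1, hDeq j2 hj2] at he
  exact hinj he

end StdMono

theorem standard_monomials_linearIndependent
    (k : Type*) [Field k] (n r m : ℕ) :
    LinearIndependent k
      (fun c : {c : Fin m → {f : Fin r → Fin n // StrictMono f} //
          ∀ i j : Fin m, i ≤ j → ∀ l : Fin r, (c i).1 l ≤ (c j).1 l} =>
        ∏ i : Fin m, pluecker k n r (c.1 i)) := by
  apply StdMono.linearIndependent_of_supDegree_injective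
  · intro c
    exact (StdMono.prod_pluecker_supDegree_monic (k := k) (c := c.1)).2.ne_zero
  · intro c c' h
    simp only [(StdMono.prod_pluecker_supDegree_monic (k := k) (c := c.1)).1,
      (StdMono.prod_pluecker_supDegree_monic (k := k) (c := c'.1)).1] at h
    exact StdMono.sum_pexp_injective (StdMono.DD_inj h)
end
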